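/- arXiv:0904.3239 — 8 statements merged into one kernel-verified Lean document; each statement's English description precedes it below -/
import Mathlib

section
/- (Tits 1964) If D = (X,B) is a non-trivial Steiner t-design with v points and block size k, then v ≥ (t+1)(k-t+1). -/
/-!
Take a `t`-set `S` inside a block `b₀` and a point `x ∉ b₀`; then `E = S ∪ {x}` is a
`(t + 1)`-set lying in no block. For `y ∈ E` let `b_y` be the block through `E \ {y}`; it misses
`y`, so `b_y \ E` has `k - t` points. Two of these blocks share the `t - 1` points of
`E \ {y, y'}`, and distinct blocks meet in fewer than `t` points, so the sets `b_y \ E` are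
pairwise disjoint. Together with `E` they give `(t + 1) + (t + 1)(k - t)` distinct points.
-/

open Finset

section SteinerDesign

variable {X : Type*} [DecidableEq X]

def IsSteinerDesign (t : ℕ) (B : Finset (Finset X)) : Prop :=
  ∀ S : Finset X, S.card = t → (B.filter (fun b => S ⊆ b)).card = 1

namespace IsSteinerDesign

variable {t k : ℕ} {B : Finset (Finset X)} {S E b b' : Finset X}

theorem exists_mem_subset (hD : IsSteinerDesign t B) (hS : S.card = t) : ∃ b ∈ B, S ⊆ b :=
  filter_nonempty_iff.mp (card_pos.mp (by rw [hD S hS]; exact Nat.one_pos))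

theorem eq_of_subset (hD : IsSteinerDesign t B) (hS : S.card = t) (hb : b ∈ B) (hb' : b' ∈ B)
    (hSb : S ⊆ b) (hSb' : S ⊆ b') : b = b' :=
  card_le_one.mp (hD S hS).le b (mem_filter.mpr ⟨hb, hSb⟩) b' (mem_filter.mpr ⟨hb', hSb'⟩)

theorem card_inter_lt (hD : IsSteinerDesign t B) (hb : b ∈ B) (hb' : b' ∈ B) (hne : b ≠ b') :
    (b ∩ b').card < t := by
  by_contra! h
  obtain ⟨S, hS, hcard⟩ := exists_subset_card_eq h
  exact hne (hD.eq_of_subset hcard hb hb' (hS.trans inter_subset_left)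
    (hS.trans inter_subset_right))

theorem exists_card_eq_succ_forall_not_subset (hD : IsSteinerDesign t B) {b₀ : Finset X} {x : X}
    (hb₀ : b₀ ∈ B) (ht : t ≤ b₀.card) (hx : x ∉ b₀) :
    ∃ E : Finset X, E.card = t + 1 ∧ ∀ b ∈ B, ¬E ⊆ b := by
  obtain ⟨S, hSb₀, hS⟩ := exists_subset_card_eq ht
  refine ⟨insert x S, by rw [card_insert_of_notMem (fun h => hx (hSb₀ h)), hS],
    fun b hb hE => hx ?_⟩
  obtain rfl : b = b₀ := hD.eq_of_subset hS hb hb₀ ((subset_insert x S).trans hE) hSb₀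
  exact hE (mem_insert_self x S)

theorem disjoint_sdiff_sdiff (hD : IsSteinerDesign t B) (hb : b ∈ B) (hb' : b' ∈ B)
    (hne : b ≠ b') (hE : t ≤ (b ∩ b' ∩ E).card + 1) : Disjoint (b \ E) (b' \ E) := by
  refine disjoint_left.mpr fun z hz hz' => ?_
  have hzE : z ∉ b ∩ b' ∩ E := fun h => (mem_sdiff.mp hz).2 (mem_inter.mp h).2
  have hsub : insert z (b ∩ b' ∩ E) ⊆ b ∩ b' :=
    insert_subset (mem_inter.mpr ⟨(mem_sdiff.mp hz).1, (mem_sdiff.mp hz').1⟩) inter_subset_left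
  have hle := card_le_card hsub
  rw [card_insert_of_notMem hzE] at hle
  have hlt := hD.card_inter_lt hb hb' hne
  omega

theorem succ_mul_le_card [Fintype X] (hD : IsSteinerDesign t B)
    (hblocks : ∀ b ∈ B, b.card = k) (hE : E.card = t + 1) (hEB : ∀ b ∈ B, ¬E ⊆ b) :
    (t + 1) * (k - t + 1) ≤ Fintype.card X := by
  have hblock : ∀ y ∈ E, ∃ b ∈ B, E.erase y ⊆ b := fun y hy =>
    hD.exists_mem_subset (by rw [card_erase_of_mem hy, hE]; rfl)
  choose! f hfB hfsub using hblock
  have hnot : ∀ y ∈ E, y ∉ f y := fun y hy hyf =>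
    hEB _ (hfB y hy) (by rw [← insert_erase hy]; exact insert_subset hyf (hfsub y hy))
  have hcard : ∀ y ∈ E, (f y \ E).card = k - t := by
    intro y hy
    rw [← insert_erase hy, sdiff_insert_of_notMem (hnot y hy), card_sdiff_of_subset (hfsub y hy),
      hblocks _ (hfB y hy), card_erase_of_mem hy, hE, Nat.add_sub_cancel]
  have hdisj : (E : Set X).PairwiseDisjoint (fun y => f y \ E) := by
    intro y hy y' hy' hne
    have hy'f : y' ∈ f y := hfsub y hy (mem_erase.mpr ⟨Ne.symm hne, hy'⟩)
    refine hD.disjoint_sdiff_sdiff (hfB y hy) (hfB y' hy') (fun h => hnot y' hy' (h ▸ hy'f)) ?_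
    have hsub : (E.erase y).erase y' ⊆ f y ∩ f y' ∩ E := fun z hz => by
      obtain ⟨hzy', hz⟩ := mem_erase.mp hz
      exact mem_inter.mpr ⟨mem_inter.mpr ⟨hfsub y hy hz,
        hfsub y' hy' (mem_erase.mpr ⟨hzy', mem_of_mem_erase hz⟩)⟩, mem_of_mem_erase hz⟩
    have hle := card_le_card hsub
    rw [card_erase_of_mem (mem_erase.mpr ⟨Ne.symm hne, hy'⟩), card_erase_of_mem hy, hE] at hle
    omega
  have hEdisj : Disjoint E (E.biUnion fun y => f y \ E) :=
    disjoint_left.mpr fun z hz hz' => by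
      obtain ⟨y, -, hzy⟩ := mem_biUnion.mp hz'
      exact (mem_sdiff.mp hzy).2 hz
  calc (t + 1) * (k - t + 1) = (E ∪ E.biUnion fun y => f y \ E).card := by
        rw [card_union_of_disjoint hEdisj, card_biUnion hdisj, sum_congr rfl hcard, sum_const,
          smul_eq_mul, hE]
        ring
    _ ≤ Fintype.card X := card_le_univ _

end IsSteinerDesign

end SteinerDesign

/-- **Tits 1964.** If `D = (X, B)` is a non-trivial Steiner
`t`-design with `v` points and block size `k`, then `v ≥ (t + 1) * (k - t + 1)`. -/
theorem stmt_5 (X : Type*) [Fintype X] [DecidableEq X]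
    (v k t : ℕ) (B : Finset (Finset X))
    (hv : Fintype.card X = v) (htk : t < k) (hkv : k < v)
    (hblocks : ∀ b ∈ B, b.card = k)
    (hdesign : ∀ S : Finset X, S.card = t → (B.filter (fun b => S ⊆ b)).card = 1) :
    v ≥ (t + 1) * (k - t + 1) := by
  have hD : IsSteinerDesign t B := hdesign
  obtain ⟨S, -, hS⟩ := exists_subset_card_eq (s := (univ : Finset X)) (n := t)
    (by rw [card_univ]; omega)
  obtain ⟨b₀, hb₀, -⟩ := hD.exists_mem_subset hS
  obtain ⟨x, -, hx⟩ := exists_mem_notMem_of_card_lt_card (s := b₀) (t := univ)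
    (by rw [card_univ, hblocks b₀ hb₀]; omega)
  obtain ⟨E, hE, hEB⟩ :=
    hD.exists_card_eq_succ_forall_not_subset hb₀ (hblocks b₀ hb₀ ▸ htk.le) hx
  exact hv ▸ hD.succ_mul_le_card hblocks hE hEB
end

section
/- (Cameron 1976) If D = (X,B) is a non-trivial Steiner t-design with t > 2, v points and block size k, then v - t + 1 ≥ (k-t+2)(k-t+1); and if equality holds, then (t,k,v) is one of (3,4,8), (3,6,22), (3,12,112), (4,7,23), (5,8,24). -/
/-!
Fix `t - 2` points `S` of a block `b₀` and a point `x ∉ b₀`. The blocks through `S ∪ {x}` meet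
the remaining `v - t + 1` points in `k - t + 1` points each and cover each of them once, so there
are `(v - t + 1) / (k - t + 1)` of them; distinct points of `b₀ \ S` lie on distinct such blocks,
which gives the inequality. In the equality case put `n = k - t + 1`, so that
`v - t + 1 = (n + 1) n`.
Integrality of `λ_{t-3} = C(v - t + 3, 3) / C(k - t + 3, 3)` forces `n + 2 ∣ 12`, i.e.
`n ∈ {2, 4, 10}`, and integrality of `λ_{t-4}` (of `λ_{t-6}` when `n = 4`) then bounds `t`.
-/

open Finset

structure IsSteinerSystem {X : Type*} [DecidableEq X] (B : Finset (Finset X)) (t k : ℕ) :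
    Prop where
  card_of_mem : ∀ b ∈ B, #b = k
  card_filter_superset : ∀ S : Finset X, #S = t → #{b ∈ B | S ⊆ b} = 1

namespace IsSteinerSystem

variable {X : Type*} [DecidableEq X] {B : Finset (Finset X)} {t k : ℕ}

lemma exists_superset (hD : IsSteinerSystem B t k) {T : Finset X} (hT : #T = t) :
    ∃ b ∈ B, T ⊆ b := by
  obtain ⟨b, hb⟩ := card_eq_one.mp (hD.card_filter_superset T hT)
  exact ⟨b, mem_filter.mp (hb ▸ mem_singleton_self b)⟩

lemma eq_of_superset (hD : IsSteinerSystem B t k) {T b₁ b₂ : Finset X} (hT : #T = t)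
    (hb₁ : b₁ ∈ B) (hb₂ : b₂ ∈ B) (hTb₁ : T ⊆ b₁) (hTb₂ : T ⊆ b₂) : b₁ = b₂ :=
  card_le_one.mp (hD.card_filter_superset T hT).le _ (mem_filter.mpr ⟨hb₁, hTb₁⟩) _
    (mem_filter.mpr ⟨hb₂, hTb₂⟩)

/-- Double counting the pairs `(T, b)` with `S ⊆ T ⊆ b`, `#T = t`, `b ∈ B`. -/
lemma card_filter_superset_mul_choose [Fintype X] (hD : IsSteinerSystem B t k)
    {S : Finset X} (hS : #S ≤ t) :
    #{b ∈ B | S ⊆ b} * (k - #S).choose (t - #S) = (Fintype.card X - #S).choose (t - #S) := by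
  have h := card_mul_eq_card_mul (fun b T => T ⊆ b) (s := {b ∈ B | S ⊆ b})
    (t := (univ.powersetCard t).filter (S ⊆ ·)) (m := (k - #S).choose (t - #S)) (n := 1)
    (fun b hb => by
      obtain ⟨hbB, hSb⟩ := mem_filter.mp hb
      rw [← hD.card_of_mem b hbB, ← card_filter_powersetCard_subset S b t hSb hS]
      congr 1
      ext T
      simp only [bipartiteAbove, mem_filter, mem_powersetCard, subset_univ, true_and]
      tauto)
    (fun T hT => by
      obtain ⟨hT, hST⟩ := mem_filter.mp hT
      rw [← hD.card_filter_superset T (mem_powersetCard.mp hT).2]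
      congr 1
      ext b
      simp only [bipartiteBelow, mem_filter, and_assoc]
      exact and_congr_right fun _ => ⟨And.right, fun hTb => ⟨hST.trans hTb, hTb⟩⟩)
  rwa [card_filter_powersetCard_subset S univ t (subset_univ S) hS, card_univ, mul_one] at h

lemma choose_dvd_choose [Fintype X] (hD : IsSteinerSystem B t k) (htk : t ≤ k)
    (htX : t ≤ Fintype.card X) {j : ℕ} (hj : j ≤ t) :
    (k - t + j).choose j ∣ (Fintype.card X - t + j).choose j := by
  obtain ⟨S, -, hS⟩ := exists_subset_card_eq (s := (univ : Finset X)) (n := t - j)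
    (by rw [card_univ]; omega)
  have h := hD.card_filter_superset_mul_choose (S := S) (by omega)
  rw [hS, show t - (t - j) = j by omega, show k - (t - j) = k - t + j by omega,
    show Fintype.card X - (t - j) = Fintype.card X - t + j by omega] at h
  exact Dvd.intro_left _ h

/-- Each `y ∈ b₀ \ S` lies on a block through `insert x S`, and no such block contains two points
of `b₀ \ S`: it would share `t` points with `b₀` while containing `x ∉ b₀`. -/
lemma card_sdiff_le_card_filter_insert_superset (hD : IsSteinerSystem B t k)
    {b₀ S : Finset X} {x : X} (hb₀ : b₀ ∈ B) (hSb₀ : S ⊆ b₀) (hS : #S + 2 = t) (hx : x ∉ b₀) :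
    #(b₀ \ S) ≤ #{b ∈ B | insert x S ⊆ b} := by
  refine card_le_card_of_forall_subsingleton (fun y b => y ∈ b) (fun y hy => ?_) ?_
  · obtain ⟨hyb₀, hyS⟩ := mem_sdiff.mp hy
    have hxy : x ∉ insert y S := by
      rw [mem_insert]; rintro (rfl | hxS)
      exacts [hx hyb₀, hx (hSb₀ hxS)]
    obtain ⟨b, hb, hsub⟩ := hD.exists_superset (T := insert x (insert y S))
      (by rw [card_insert_of_notMem hxy, card_insert_of_notMem hyS]; omega)
    refine ⟨b, mem_filter.mpr ⟨hb, (insert_subset_insert x (subset_insert y S)).trans hsub⟩, ?_⟩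
    exact hsub (mem_insert_of_mem (mem_insert_self y S))
  · intro b hb y₁ ⟨hy₁, hy₁b⟩ y₂ ⟨hy₂, hy₂b⟩
    obtain ⟨hbB, hxSb⟩ := mem_filter.mp hb
    obtain ⟨hy₁b₀, hy₁S⟩ := mem_sdiff.mp hy₁
    obtain ⟨hy₂b₀, hy₂S⟩ := mem_sdiff.mp hy₂
    by_contra hne
    have hT : #(insert y₁ (insert y₂ S)) = t := by
      rw [card_insert_of_notMem (by simp [hne, hy₁S]), card_insert_of_notMem hy₂S]; omega
    have hbb₀ : b = b₀ := hD.eq_of_superset hT hbB hb₀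
      (insert_subset hy₁b (insert_subset hy₂b ((subset_insert x S).trans hxSb)))
      (insert_subset hy₁b₀ (insert_subset hy₂b₀ hSb₀))
    exact hx (hbb₀ ▸ hxSb (mem_insert_self x S))

lemma mul_le_card_sub [Fintype X] (hD : IsSteinerSystem B t k) (ht : 2 ≤ t) (htk : t ≤ k)
    (hkX : k < Fintype.card X) :
    (k - t + 2) * (k - t + 1) ≤ Fintype.card X - t + 1 := by
  obtain ⟨T, -, hT⟩ := exists_subset_card_eq (s := (univ : Finset X)) (n := t)
    (by rw [card_univ]; omega)
  obtain ⟨b₀, hb₀, -⟩ := hD.exists_superset hT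
  have hb₀k := hD.card_of_mem b₀ hb₀
  obtain ⟨S, hSb₀, hS⟩ := exists_subset_card_eq (s := b₀) (n := t - 2) (by omega)
  obtain ⟨x, -, hx⟩ := exists_mem_notMem_of_card_lt_card (s := b₀) (t := univ)
    (by rw [card_univ]; omega)
  have hxS : x ∉ S := fun h => hx (hSb₀ h)
  have hr := hD.card_filter_superset_mul_choose (S := insert x S)
    (by rw [card_insert_of_notMem hxS]; omega)
  rw [card_insert_of_notMem hxS, hS, show t - (t - 2 + 1) = 1 by omega, Nat.choose_one_right,
    Nat.choose_one_right, show k - (t - 2 + 1) = k - t + 1 by omega,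
    show Fintype.card X - (t - 2 + 1) = Fintype.card X - t + 1 by omega] at hr
  have hle := hD.card_sdiff_le_card_filter_insert_superset hb₀ hSb₀ (by omega) hx
  rw [card_sdiff_of_subset hSb₀, hb₀k, hS, show k - (t - 2) = k - t + 2 by omega] at hle
  calc (k - t + 2) * (k - t + 1) ≤ #{b ∈ B | insert x S ⊆ b} * (k - t + 1) :=
        Nat.mul_le_mul_right _ hle
    _ = Fintype.card X - t + 1 := hr

end IsSteinerSystem

/-- Modulo `n + 2` we have `(n + 1) n ≡ 2`, so `((n + 1) n + 2)((n + 1) n + 1) ≡ 12`. -/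
lemma add_two_dvd_twelve_of_choose_dvd {n : ℕ} (hn : 0 < n)
    (h : (n + 2).choose 3 ∣ ((n + 1) * n + 2).choose 3) : n + 2 ∣ 12 := by
  have hdesc (a : ℕ) : (a + 2).descFactorial 3 = (a + 2) * ((a + 1) * a) := by
    simp [Nat.descFactorial_succ]; ring
  have h6 := mul_dvd_mul_left (3).factorial h
  rw [← Nat.descFactorial_eq_factorial_mul_choose, ← Nat.descFactorial_eq_factorial_mul_choose,
    hdesc, hdesc] at h6
  have h12 : n + 2 ∣ ((n + 1) * n + 2) * ((n + 1) * n + 1) :=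
    Nat.dvd_of_mul_dvd_mul_right (k := (n + 1) * n) (by positivity)
      (by rwa [mul_assoc ((n + 1) * n + 2)])
  obtain ⟨m, rfl⟩ : ∃ m, n = m + 1 := ⟨n - 1, by omega⟩
  rw [show ((m + 1 + 1) * (m + 1) + 2) * ((m + 1 + 1) * (m + 1) + 1)
      = (m + 1 + 2) * (m ^ 3 + 3 * m ^ 2 + 7 * m) + 12 by ring] at h12
  exact (Nat.dvd_add_right (dvd_mul_right _ _)).mp h12

lemma tight_params_of_choose_dvd {t k v : ℕ} (ht : 3 ≤ t) (htk : t < k)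
    (heq : v - t + 1 = (k - t + 2) * (k - t + 1))
    (hdvd : ∀ j ≤ t, (k - t + j).choose j ∣ (v - t + j).choose j) :
    (t, k, v) = (3, 4, 8) ∨ (t, k, v) = (3, 6, 22) ∨ (t, k, v) = (3, 12, 112) ∨
      (t, k, v) = (4, 7, 23) ∨ (t, k, v) = (5, 8, 24) := by
  obtain ⟨n, rfl⟩ : ∃ n, k = t + 1 + n := ⟨k - t - 1, by omega⟩
  rw [show t + 1 + n - t = n + 1 by omega] at heq hdvd
  have h12 : n + 4 ∣ 12 := by
    have hv : (n + 2 + 1) * (n + 2) + 2 = v - t + 3 := by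
      rw [show (n + 2 + 1) * (n + 2) = (n + 1 + 2) * (n + 1 + 1) by ring]; omega
    refine add_two_dvd_twelve_of_choose_dvd (n := n + 2) (by omega) ?_
    rw [hv]
    exact hdvd 3 ht
  have hn : n = 0 ∨ n = 2 ∨ n = 8 := by
    have : n ≤ 8 := by have := Nat.le_of_dvd (by norm_num) h12; omega
    interval_cases n <;> omega
  simp only [Prod.mk.injEq]
  rcases hn with rfl | rfl | rfl
  · rcases (show t = 3 ∨ 4 ≤ t by omega) with rfl | ht4
    · omega
    · have := hdvd 4 ht4
      rw [show v - t + 4 = 9 by omega] at this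
      exact absurd this (by decide)
  · rcases (show t ≤ 5 ∨ 6 ≤ t by omega) with ht5 | ht6
    · omega
    · have := hdvd 6 ht6
      rw [show v - t + 6 = 25 by omega] at this
      exact absurd this (by decide)
  · rcases (show t = 3 ∨ 4 ≤ t by omega) with rfl | ht4
    · omega
    · have := hdvd 4 ht4
      rw [show v - t + 4 = 113 by omega] at this
      exact absurd this (by decide)

/-- **Cameron 1976.** If `D = (X, B)` is a non-trivial Steiner
`t`-design with `t > 2`, `v` points and block size `k`, then
`v - t + 1 ≥ (k - t + 2) * (k - t + 1)`; and if equality holds, then `(t, k, v)` is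
one of `(3,4,8)`, `(3,6,22)`, `(3,12,112)`, `(4,7,23)`, `(5,8,24)`. -/
theorem stmt_6 (X : Type*) [Fintype X] [DecidableEq X]
    (v k t : ℕ) (B : Finset (Finset X))
    (hv : Fintype.card X = v) (ht : 2 < t) (htk : t < k) (hkv : k < v)
    (hblocks : ∀ b ∈ B, b.card = k)
    (hdesign : ∀ S : Finset X, S.card = t → (B.filter (fun b => S ⊆ b)).card = 1) :
    v - t + 1 ≥ (k - t + 2) * (k - t + 1) ∧
      (v - t + 1 = (k - t + 2) * (k - t + 1) →
        (t, k, v) = (3, 4, 8) ∨ (t, k, v) = (3, 6, 22) ∨ (t, k, v) = (3, 12, 112) ∨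
          (t, k, v) = (4, 7, 23) ∨ (t, k, v) = (5, 8, 24)) := by
  have hD : IsSteinerSystem B t k := ⟨hblocks, hdesign⟩
  subst hv
  exact ⟨hD.mul_le_card_sub ht.le htk.le hkv, fun heq => tight_params_of_choose_dvd ht htk heq
    fun j hj => hD.choose_dvd_choose htk.le (by omega) hj⟩
end

section
/- If D = (X,B) is a non-trivial Steiner 6-design with v points and block size k, then k ≤ ⌊√(v - 19/4) + 9/2⌋ (equivalently, v ≥ k² - 9k + 25). -/
/-!
Fix a block `b₀`, a `4`-subset `T ⊆ b₀` and a point `p ∉ b₀`. The blocks through the `5`-set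
`T ∪ {p}` partition the remaining `v - 5` points into pieces of size `k - 5`, so there are
`(v - 5) / (k - 5)` of them. Each of the `k - 4` points of `b₀ \ T` lies in one of these blocks, and
no such block contains two of them: it would share the `6`-set `T ∪ {x, y}` with `b₀`, hence be
`b₀`, which misses `p`. So `(k - 4) (k - 5) ≤ v - 5`, i.e. `(k - 9/2)² ≤ v - 19/4`.
-/

open Finset

def Finset.IsSteinerSystem {X : Type*} [DecidableEq X] (t : ℕ) (B : Finset (Finset X)) : Prop :=
  ∀ S : Finset X, #S = t → #{b ∈ B | S ⊆ b} = 1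

namespace Finset.IsSteinerSystem

variable {X : Type*} [DecidableEq X] {t : ℕ} {B : Finset (Finset X)}

theorem exists_block (h : IsSteinerSystem t B) {S : Finset X} (hS : #S = t) :
    ∃ b ∈ B, S ⊆ b := by
  obtain ⟨b, hb⟩ := card_pos.mp (h S hS ▸ Nat.one_pos)
  exact ⟨b, (mem_filter.mp hb).1, (mem_filter.mp hb).2⟩

theorem eq_of_subset (h : IsSteinerSystem t B) {S b₁ b₂ : Finset X} (hS : #S = t)
    (hb₁ : b₁ ∈ B) (hb₂ : b₂ ∈ B) (h₁ : S ⊆ b₁) (h₂ : S ⊆ b₂) : b₁ = b₂ :=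
  card_le_one.mp (h S hS).le _ (mem_filter.mpr ⟨hb₁, h₁⟩) _ (mem_filter.mpr ⟨hb₂, h₂⟩)

theorem card_sdiff_le_card_filter_insert_subset (h : IsSteinerSystem t B)
    {b₀ T : Finset X} {p : X} (hb₀ : b₀ ∈ B) (hTb₀ : T ⊆ b₀) (hT : #T + 2 = t) (hp : p ∉ b₀) :
    #(b₀ \ T) ≤ #{b ∈ B | insert p T ⊆ b} := by
  have hpT : p ∉ T := fun hpT => hp (hTb₀ hpT)
  apply card_le_card_of_forall_subsingleton (fun x b => x ∈ b)
  · intro x hx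
    obtain ⟨hxb₀, hxT⟩ := mem_sdiff.mp hx
    have hxp : x ≠ p := by rintro rfl; exact hp hxb₀
    obtain ⟨b, hbB, hb⟩ := h.exists_block (S := insert x (insert p T))
      (by rw [card_insert_of_notMem (by simp [hxp, hxT]), card_insert_of_notMem hpT, ← hT])
    exact ⟨b, mem_filter.mpr ⟨hbB, (subset_insert _ _).trans hb⟩, hb (mem_insert_self _ _)⟩
  · intro c hc x hx y hy
    by_contra hxy
    obtain ⟨hcB, hpTc⟩ := mem_filter.mp hc
    obtain ⟨hx, hxc⟩ := hx
    obtain ⟨hy, hyc⟩ := hy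
    obtain ⟨hxb₀, hxT⟩ := mem_sdiff.mp hx
    obtain ⟨hyb₀, hyT⟩ := mem_sdiff.mp hy
    have hxyT : #(insert x (insert y T)) = t := by
      rw [card_insert_of_notMem (by simp [hxy, hxT]), card_insert_of_notMem hyT, ← hT]
    have hcb₀ : c = b₀ := h.eq_of_subset hxyT hcB hb₀
      (insert_subset hxc (insert_subset hyc ((subset_insert _ _).trans hpTc)))
      (insert_subset hxb₀ (insert_subset hyb₀ hTb₀))
    exact hp (hcb₀ ▸ hpTc (mem_insert_self _ _))

variable [Fintype X] {k : ℕ}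

-- The blocks through a `(t - 1)`-set `S` partition its complement.
theorem card_filter_superset_mul (h : IsSteinerSystem t B) (hB : ∀ b ∈ B, #b = k)
    {S : Finset X} (hS : #S + 1 = t) :
    #{b ∈ B | S ⊆ b} * (k - #S) = Fintype.card X - #S := by
  have hcount := card_mul_eq_card_mul (s := {b ∈ B | S ⊆ b}) (t := univ \ S)
    (fun b y => y ∈ b) (m := k - #S) (n := 1) ?_ ?_
  · rwa [mul_one, card_univ_sdiff] at hcount
  · intro b hb
    obtain ⟨hbB, hSb⟩ := mem_filter.mp hb
    have habove : (univ \ S).bipartiteAbove (fun b y => y ∈ b) b = b \ S := by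
      ext y; simp [bipartiteAbove, and_comm]
    rw [habove, card_sdiff_of_subset hSb, hB b hbB]
  · intro y hy
    have hyS : y ∉ S := (mem_sdiff.mp hy).2
    have hbelow : {b ∈ B | S ⊆ b}.bipartiteBelow (fun b y => y ∈ b) y =
        {b ∈ B | insert y S ⊆ b} := by
      ext b; simp only [bipartiteBelow, mem_filter, insert_subset_iff]; tauto
    rw [hbelow, h _ (by rw [card_insert_of_notMem hyS, hS])]

theorem sub_mul_sub_le (h : IsSteinerSystem t B) (hB : ∀ b ∈ B, #b = k) (ht : 2 ≤ t)
    (htk : t ≤ k) (hkv : k < Fintype.card X) :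
    (k - (t - 2)) * (k - (t - 1)) ≤ Fintype.card X - (t - 1) := by
  obtain ⟨S₀, -, hS₀⟩ := exists_subset_card_eq (s := (univ : Finset X)) (n := t)
    (by rw [card_univ]; omega)
  obtain ⟨b₀, hb₀B, -⟩ := h.exists_block hS₀
  obtain ⟨T, hTb₀, hT⟩ := exists_subset_card_eq (s := b₀) (n := t - 2)
    (by rw [hB b₀ hb₀B]; omega)
  obtain ⟨p, -, hp⟩ := exists_mem_notMem_of_card_lt_card (s := b₀) (t := univ)
    (by rw [hB b₀ hb₀B, card_univ]; exact hkv)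
  have hpT : #(insert p T) = t - 1 := by
    rw [card_insert_of_notMem fun hpT => hp (hTb₀ hpT), hT]; omega
  have hlower := h.card_sdiff_le_card_filter_insert_subset hb₀B hTb₀ (by omega) hp
  have hcount := h.card_filter_superset_mul hB (S := insert p T) (by omega)
  rw [card_sdiff_of_subset hTb₀, hB b₀ hb₀B, hT] at hlower
  rw [hpT] at hcount
  exact hcount ▸ Nat.mul_le_mul_right _ hlower

end Finset.IsSteinerSystem

theorem le_floor_sqrt_of_sub_mul_sub_le {k v : ℕ} (hk : 5 ≤ k) (hkv : k ≤ v)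
    (h : (k - 4) * (k - 5) ≤ v - 5) :
    (k : ℤ) ≤ ⌊Real.sqrt ((v : ℝ) - 19 / 4) + 9 / 2⌋ := by
  have hreal : ((k : ℝ) - 4) * ((k : ℝ) - 5) ≤ (v : ℝ) - 5 := by
    have := (Nat.cast_le (α := ℝ)).mpr h
    push_cast [Nat.cast_sub hk, Nat.cast_sub (hk.trans hkv), Nat.cast_sub (by omega : 4 ≤ k)]
      at this
    exact this
  have hk' : (9 / 2 : ℝ) ≤ k := by
    have : (5 : ℝ) ≤ k := by exact_mod_cast hk
    linarith
  have hsqrt : (k : ℝ) - 9 / 2 ≤ Real.sqrt ((v : ℝ) - 19 / 4) :=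
    Real.le_sqrt_of_sq_le (by nlinarith)
  rw [Int.le_floor]
  push_cast
  linarith

/-- If `D = (X, B)` is a non-trivial Steiner `6`-design with `v`
points and block size `k`, then `k ≤ ⌊√(v - 19/4) + 9/2⌋`. -/
theorem stmt_7 (X : Type*) [Fintype X] [DecidableEq X]
    (v k : ℕ) (B : Finset (Finset X))
    (hv : Fintype.card X = v) (htk : 6 < k) (hkv : k < v)
    (hblocks : ∀ b ∈ B, b.card = k)
    (hdesign : ∀ S : Finset X, S.card = 6 → (B.filter (fun b => S ⊆ b)).card = 1) :
    (k : ℤ) ≤ ⌊Real.sqrt ((v : ℝ) - 19 / 4) + 9 / 2⌋ := by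
  have hsystem : IsSteinerSystem 6 B := hdesign
  have hbound := hsystem.sub_mul_sub_le hblocks (by norm_num) htk.le (hv ▸ hkv)
  rw [hv] at hbound
  exact le_floor_sqrt_of_sub_mul_sub_le (by omega) hkv.le hbound
end

section
/- (Block 1965) Let D = (X,B) be a t-(v,k,λ) design with t ≥ 2 and k < v. If a group G of automorphisms of D acts transitively on the blocks of D, then G acts transitively on the points of D. -/
/-!
Let `O` be the `G`-orbit of a point. Since `G` permutes the blocks transitively and fixes `O`
setwise, every block meets `O` in the same number `m` of points. Counting the pairs
(`s`-subset of `O`, block containing it) for `s = 1, 2`, and comparing with the same count for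
the whole point set, gives `m v = k |O|` and `C(m,2) C(v,2) = C(k,2) C(|O|,2)`. These two
equations force `(v - k)(|O| - v) = 0`, hence `|O| = v` because `k < v`.
-/

open Finset

theorem sum_choose_card_inter_eq_sum_card_filter_superset {α : Type*} [DecidableEq α]
    (B : Finset (Finset α)) (S : Finset α) (s : ℕ) :
    ∑ b ∈ B, (#(b ∩ S)).choose s = ∑ P ∈ S.powersetCard s, #{b ∈ B | P ⊆ b} := by
  have hcount := sum_card_bipartiteAbove_eq_sum_card_bipartiteBelow (s := S.powersetCard s)
    (t := B) (r := (· ⊆ ·))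
  simp only [bipartiteAbove, bipartiteBelow] at hcount
  rw [hcount]
  refine sum_congr rfl fun b _ => ?_
  rw [← card_powersetCard]
  congr 1
  ext P
  simp only [mem_filter, mem_powersetCard, subset_inter_iff]
  tauto

section Design

variable {X : Type*} [Fintype X] [DecidableEq X] {t k lam : ℕ} {B : Finset (Finset X)}

theorem nonempty_of_card_filter_superset_eq (hdesign : ∀ S : Finset X, S.card = t →
      (B.filter (fun b => S ⊆ b)).card = lam)
    (hlam : 0 < lam) (htv : t ≤ Fintype.card X) : B.Nonempty := by
  obtain ⟨T, -, hT⟩ := exists_subset_card_eq (show t ≤ #(univ : Finset X) by rwa [card_univ])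
  obtain ⟨b, hb⟩ : (B.filter (fun b => T ⊆ b)).Nonempty := by
    rw [← card_pos, hdesign T hT]
    exact hlam
  exact ⟨b, (mem_filter.mp hb).1⟩

variable (hblocks : ∀ b ∈ B, b.card = k)
  (hdesign : ∀ S : Finset X, S.card = t → (B.filter (fun b => S ⊆ b)).card = lam)
include hblocks hdesign

/-- A `t`-design is an `s`-design for every `s ≤ t`. -/
theorem card_filter_superset_mul_choose (S : Finset X) (hS : #S ≤ t) :
    #{b ∈ B | S ⊆ b} * (k - #S).choose (t - #S)
      = lam * (Fintype.card X - #S).choose (t - #S) := by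
  set 𝒯 := {T ∈ (univ : Finset X).powersetCard t | S ⊆ T}
  have hcount := sum_card_bipartiteAbove_eq_sum_card_bipartiteBelow
    (s := 𝒯) (t := {b ∈ B | S ⊆ b}) (r := (· ⊆ ·))
  have habove : ∀ T ∈ 𝒯, #({b ∈ B | S ⊆ b}.bipartiteAbove (· ⊆ ·) T) = lam := by
    intro T hT
    simp only [𝒯, mem_filter, mem_powersetCard] at hT
    rw [← hdesign T hT.1.2, bipartiteAbove, filter_filter]
    congr 1
    ext b
    simp only [mem_filter, and_congr_right_iff, and_iff_right_iff_imp]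
    exact fun _ hTb => hT.2.trans hTb
  have hbelow : ∀ b ∈ {b ∈ B | S ⊆ b},
      #(𝒯.bipartiteBelow (· ⊆ ·) b) = (k - #S).choose (t - #S) := by
    intro b hb
    rw [mem_filter] at hb
    rw [← hblocks b hb.1, ← card_filter_powersetCard_subset S b t hb.2 hS]
    congr 1
    ext T
    simp only [𝒯, bipartiteBelow, mem_filter, mem_powersetCard, subset_univ, true_and]
    tauto
  rw [sum_congr rfl habove, sum_congr rfl hbelow, sum_const, sum_const, smul_eq_mul,
    smul_eq_mul, card_filter_powersetCard_subset _ _ _ (subset_univ S) hS, card_univ]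
    at hcount
  rw [← hcount, mul_comm]

theorem sum_choose_card_inter_mul_choose (S : Finset X) {s : ℕ} (hs : s ≤ t) :
    (∑ b ∈ B, (#(b ∩ S)).choose s) * (k - s).choose (t - s)
      = (#S).choose s * (lam * (Fintype.card X - s).choose (t - s)) := by
  rw [sum_choose_card_inter_eq_sum_card_filter_superset, sum_mul,
    sum_congr rfl fun P hP => ?_, sum_const, card_powersetCard, smul_eq_mul]
  obtain rfl := (mem_powersetCard.mp hP).2
  exact card_filter_superset_mul_choose hblocks hdesign P hs

/-- Compare the count for `S` with the one for the whole point set, which meets every block in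
`k` points. -/
theorem choose_mul_choose_eq_of_card_inter_eq (htk : t ≤ k) (htv : t ≤ Fintype.card X)
    (hlam : 0 < lam) {S : Finset X} {m : ℕ} (hm : ∀ b ∈ B, #(b ∩ S) = m) {s : ℕ}
    (hs : s ≤ t) :
    m.choose s * (Fintype.card X).choose s = k.choose s * (#S).choose s := by
  have hS := sum_choose_card_inter_mul_choose hblocks hdesign S hs
  have hU := sum_choose_card_inter_mul_choose hblocks hdesign univ hs
  rw [sum_congr rfl fun b hb => by rw [hm b hb], sum_const, smul_eq_mul] at hS
  rw [sum_congr rfl fun b hb => by rw [inter_univ, hblocks b hb], sum_const, smul_eq_mul,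
    card_univ] at hU
  have hB : 0 < #B := card_pos.mpr (nonempty_of_card_filter_superset_eq hdesign hlam htv)
  have hc : 0 < (k - s).choose (t - s) := Nat.choose_pos (by omega)
  have ha : 0 < lam * (Fintype.card X - s).choose (t - s) :=
    Nat.mul_pos hlam (Nat.choose_pos (by omega))
  refine Nat.eq_of_mul_eq_mul_right (Nat.mul_pos (Nat.mul_pos hB hc) ha) ?_
  calc m.choose s * (Fintype.card X).choose s * (#B * (k - s).choose (t - s) *
          (lam * (Fintype.card X - s).choose (t - s)))
      = #B * m.choose s * (k - s).choose (t - s) *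
          ((Fintype.card X).choose s * (lam * (Fintype.card X - s).choose (t - s))) := by ring
    _ = (#S).choose s * (lam * (Fintype.card X - s).choose (t - s)) *
          (#B * k.choose s * (k - s).choose (t - s)) := by rw [hS, hU]
    _ = _ := by ring

end Design

theorem eq_of_mul_eq_mul_of_choose_two_mul_eq {m v k w : ℕ} (hk : k ≠ 0) (hw : w ≠ 0)
    (hkv : k ≠ v) (h₁ : m * v = k * w)
    (h₂ : m.choose 2 * v.choose 2 = k.choose 2 * w.choose 2) : w = v := by
  have hmv : (m : ℚ) * v ≠ 0 := by exact_mod_cast h₁ ▸ Nat.mul_ne_zero hk hw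
  have h₁' : (m : ℚ) * v = k * w := by exact_mod_cast h₁
  have h₂' : (m : ℚ) * v * ((m - 1) * (v - 1)) = m * v * ((k - 1) * (w - 1)) := by
    have := congrArg (fun n : ℕ => (n : ℚ)) h₂
    simp only [Nat.cast_mul, Nat.cast_choose_two] at this
    linear_combination 4 * this - ((k - 1) * (w - 1)) * h₁'
  -- cancelling `m v` leaves `m + v = k + w`, and then `(v - k)(w - v) = v m - k w = 0`
  have hsum : (m : ℚ) + v = k + w := by
    linear_combination h₁' - mul_left_cancel₀ hmv h₂'
  have hprod : ((v : ℚ) - k) * (w - v) = 0 := by linear_combination h₁' - v * hsum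
  rcases mul_eq_zero.mp hprod with h | h
  · exact absurd (by exact_mod_cast (sub_eq_zero.mp h).symm) hkv
  · exact_mod_cast sub_eq_zero.mp h

theorem card_image_inter_of_image_eq {α : Type*} [DecidableEq α] (g : Equiv.Perm α)
    {O : Finset α} (hO : O.image g = O) (b : Finset α) : #(b.image g ∩ O) = #(b ∩ O) := by
  conv_lhs => rw [← hO, ← image_inter b O g.injective]
  exact card_image_of_injective _ g.injective

theorem image_toFinset_orbit {X : Type*} [DecidableEq X] {G : Subgroup (Equiv.Perm X)}
    {g : Equiv.Perm X} (hg : g ∈ G) (x : X) [Fintype (MulAction.orbit G x)] :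
    (MulAction.orbit G x).toFinset.image g = (MulAction.orbit G x).toFinset := by
  apply coe_injective
  rw [coe_image, Set.coe_toFinset]
  exact MulAction.smul_orbit (⟨g, hg⟩ : G) x

theorem stmt_8_general (X : Type*) [Fintype X] [DecidableEq X]
    (v k t lam : ℕ) (B : Finset (Finset X))
    (hv : Fintype.card X = v) (ht : 2 ≤ t) (htk : t ≤ k) (hkv : k < v) (hlam : 1 ≤ lam)
    (hblocks : ∀ b ∈ B, b.card = k)
    (hdesign : ∀ S : Finset X, S.card = t → (B.filter (fun b => S ⊆ b)).card = lam)
    (G : Subgroup (Equiv.Perm X))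
    (hblocktrans : ∀ b₁ ∈ B, ∀ b₂ ∈ B, ∃ g ∈ G, b₁.image g = b₂) :
    ∀ x y : X, ∃ g ∈ G, g x = y := by
  classical
  intro x y
  set O := (MulAction.orbit G x).toFinset
  have htv : t ≤ Fintype.card X := by omega
  obtain ⟨b₀, hb₀⟩ := nonempty_of_card_filter_superset_eq hdesign hlam htv
  have hm : ∀ b ∈ B, #(b ∩ O) = #(b₀ ∩ O) := by
    intro b hb
    obtain ⟨g, hg, rfl⟩ := hblocktrans b₀ hb₀ b hb
    exact card_image_inter_of_image_eq g (image_toFinset_orbit hg x) b₀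
  have h₁ :=
    choose_mul_choose_eq_of_card_inter_eq hblocks hdesign htk htv hlam hm (s := 1) (by omega)
  have h₂ := choose_mul_choose_eq_of_card_inter_eq hblocks hdesign htk htv hlam hm ht
  simp only [Nat.choose_one_right] at h₁
  have hO : #O = Fintype.card X :=
    eq_of_mul_eq_mul_of_choose_two_mul_eq (by omega)
      (card_ne_zero.mpr ⟨x, by simp [O, MulAction.mem_orbit_self]⟩) (by omega) h₁ h₂
  have hy : y ∈ O := by rw [eq_univ_of_card O hO]; exact mem_univ y
  simpa [O, MulAction.mem_orbit_iff] using hy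

/-- **Block 1965.** Let `D = (X, B)` be a `t`-`(v, k, λ)` design with
`t ≥ 2` and `k < v`. If a group `G` of automorphisms of `D` acts transitively on
the blocks of `D`, then `G` acts transitively on the points of `D`. -/
theorem stmt_8 (X : Type*) [Fintype X] [DecidableEq X]
    (v k t lam : ℕ) (B : Finset (Finset X))
    (hv : Fintype.card X = v) (ht : 2 ≤ t) (htk : t ≤ k) (hkv : k < v) (hlam : 1 ≤ lam)
    (hblocks : ∀ b ∈ B, b.card = k)
    (hdesign : ∀ S : Finset X, S.card = t → (B.filter (fun b => S ⊆ b)).card = lam)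
    (G : Subgroup (Equiv.Perm X))
    (hAut : ∀ g ∈ G, ∀ b ∈ B, b.image g ∈ B)
    (hblocktrans : ∀ b₁ ∈ B, ∀ b₂ ∈ B, ∃ g ∈ G, b₁.image g = b₂) :
    ∀ x y : X, ∃ g ∈ G, g x = y :=
  stmt_8_general X v k t lam B hv ht htk hkv hlam hblocks hdesign G hblocktrans
end

section
/- Let D = (X,B) be a t-(v,k,λ) design with t ≥ 3 and t < k < v. If a group G of automorphisms of D acts transitively on the flags of D, then G acts 2-transitively on the points of D. -/
/-!
Flag-transitivity makes the stabiliser `G_x` transitive on the blocks through `x`, so every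
`G_x`-orbit `Δ ⊆ X \ {x}` meets all blocks through `x` in the same number `d` of points. A
`t`-design with `t ≥ 3` is a `2`- and a `3`-design, and counting the pairs `(b, w)` with `b` a
block through `x, y` and `w ∈ b ∩ Δ \ {y}` gives `λ₂ (d - 1) = λ₃ (|Δ| - 1)` when `y ∈ Δ` and
`λ₂ d = λ₃ |Δ|` when `y ∉ Δ`. If `Δ` were a proper orbit both cases occur, so `λ₂ = λ₃`;
but the same count with `Δ = X \ {x}` gives `λ₂ (k - 2) = λ₃ (v - 2)`, forcing `k = v`.
Hence `G_x` is transitive on `X \ {x}`, and `G` is transitive on points since it is on flags.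
-/

open Finset

section Counting

variable {X : Type*} [DecidableEq X] {B : Finset (Finset X)}

/-- The `s`-design condition with index `μ`; block sizes are not constrained. -/
def IsBalanced (B : Finset (Finset X)) (s μ : ℕ) : Prop :=
  ∀ S : Finset X, #S = s → #{b ∈ B | S ⊆ b} = μ

theorem IsBalanced.exists_superset {s μ : ℕ} (h : IsBalanced B s μ) (hμ : 0 < μ)
    {S : Finset X} (hS : #S = s) : ∃ b ∈ B, S ⊆ b :=
  filter_nonempty_iff.1 (card_pos.1 (h S hS ▸ hμ))

theorem card_filter_subset_mul_eq {S E : Finset X} {μ e : ℕ} (hSE : Disjoint S E)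
    (hμ : IsBalanced B (#S + 1) μ) (he : ∀ b ∈ B, S ⊆ b → #(b ∩ E) = e) :
    #{b ∈ B | S ⊆ b} * e = μ * #E := by
  have hsum : ∑ b ∈ B with S ⊆ b, #(E ∩ b) = #E * μ := by
    refine sum_card_inter fun z hz => ?_
    rw [filter_filter, ← hμ (insert z S) (card_insert_of_notMem (disjoint_right.1 hSE hz))]
    congr 1
    exact filter_congr fun b _ => by rw [insert_subset_iff, and_comm]
  calc #{b ∈ B | S ⊆ b} * e = ∑ b ∈ B with S ⊆ b, #(E ∩ b) := by
        refine (sum_const_nat fun b hb => ?_).symm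
        rw [inter_comm]
        exact he b (mem_filter.1 hb).1 (mem_filter.1 hb).2
    _ = μ * #E := by rw [hsum, mul_comm]

theorem IsBalanced.mul_eq_mul_card_of_pair {μ₂ μ₃ : ℕ} (h2 : IsBalanced B 2 μ₂)
    (h3 : IsBalanced B 3 μ₃) {x y : X} (hxy : x ≠ y) {E : Finset X} {e : ℕ} (hx : x ∉ E)
    (hy : y ∉ E) (he : ∀ b ∈ B, x ∈ b → y ∈ b → #(b ∩ E) = e) : μ₂ * e = μ₃ * #E := by
  have hS : #{x, y} = 2 := card_pair hxy
  rw [← h2 _ hS]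
  refine card_filter_subset_mul_eq (by simp [hx, hy]) (hS ▸ h3) fun b hb hSb => ?_
  rw [insert_subset_iff, singleton_subset_iff] at hSb
  exact he b hb hSb.1 hSb.2

variable [Fintype X] {k : ℕ}

theorem IsBalanced.card_filter_subset_mul (hk : ∀ b ∈ B, #b = k) {S : Finset X} {μ : ℕ}
    (h : IsBalanced B (#S + 1) μ) :
    #{b ∈ B | S ⊆ b} * (k - #S) = μ * (Fintype.card X - #S) := by
  rw [← card_compl]
  refine card_filter_subset_mul_eq disjoint_compl_right h fun b hb hSb => ?_
  rw [← sdiff_eq_inter_compl, card_sdiff_of_subset hSb, hk b hb]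

theorem IsBalanced.of_succ (hk : ∀ b ∈ B, #b = k) {s μ : ℕ} (hs : s < k)
    (h : IsBalanced B (s + 1) μ) : IsBalanced B s (μ * (Fintype.card X - s) / (k - s)) := by
  intro S hS
  subst hS
  exact Nat.eq_div_of_mul_eq_left (by omega) (h.card_filter_subset_mul hk)

theorem IsBalanced.exists_pos_of_le (hk : ∀ b ∈ B, #b = k) (hkv : k ≤ Fintype.card X)
    {t μ : ℕ} (h : IsBalanced B t μ) (hμ : 0 < μ) (htk : t ≤ k) {s : ℕ} (hst : s ≤ t) :
    ∃ μ', 0 < μ' ∧ IsBalanced B s μ' := by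
  induction hst using Nat.decreasingInduction with
  | self => exact ⟨μ, hμ, h⟩
  | of_succ s hs ih =>
    obtain ⟨μ', hμ', h'⟩ := ih
    refine ⟨_, Nat.div_pos ?_ (by omega), h'.of_succ hk (by omega)⟩
    exact (Nat.sub_le_sub_right hkv s).trans (Nat.le_mul_of_pos_left _ hμ')

theorem IsBalanced.mem_of_card_inter_eq (hk : ∀ b ∈ B, #b = k) (hkv : k < Fintype.card X)
    {μ₂ μ₃ : ℕ} (h2 : IsBalanced B 2 μ₂) (h3 : IsBalanced B 3 μ₃) (hμ₃ : 0 < μ₃)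
    {x y z : X} {Δ : Finset X} (hx : x ∉ Δ) (hy : y ∈ Δ) (hzx : z ≠ x)
    (hΔ : ∀ b ∈ B, x ∈ b → ∀ b' ∈ B, x ∈ b' → #(b ∩ Δ) = #(b' ∩ Δ)) : z ∈ Δ := by
  by_contra hz
  have hxy : x ≠ y := fun h => hx (h ▸ hy)
  have hv : 3 ≤ Fintype.card X := (card_eq_three.2 ⟨x, y, z, hxy, hzx.symm,
    fun h => hz (h ▸ hy), rfl⟩).symm.trans_le (card_le_univ _)
  have hkey : μ₂ * (k - 2) = μ₃ * (Fintype.card X - 2) := by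
    have := h2.mul_eq_mul_card_of_pair h3 hxy (E := {x, y}ᶜ) (by simp) (by simp)
      fun b hb hxb hyb => by
        rw [← sdiff_eq_inter_compl, card_sdiff_of_subset (by simp [insert_subset_iff, *]),
          hk b hb, card_pair hxy]
    rwa [card_compl, card_pair hxy] at this
  have hμ₂ : 0 < μ₂ := Nat.pos_of_ne_zero fun h0 => by simp [h0] at hkey; omega
  obtain ⟨b₀, hb₀, hxyb₀⟩ := h2.exists_superset hμ₂ (card_pair hxy)
  rw [insert_subset_iff, singleton_subset_iff] at hxyb₀
  have hd : ∀ b ∈ B, x ∈ b → #(b ∩ Δ) = #(b₀ ∩ Δ) :=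
    fun b hb hxb => hΔ b hb hxb b₀ hb₀ hxyb₀.1
  have hd_pos : 0 < #(b₀ ∩ Δ) := card_pos.2 ⟨y, mem_inter.2 ⟨hxyb₀.2, hy⟩⟩
  have hΔ_pos : 0 < #Δ := card_pos.2 ⟨y, hy⟩
  have through_y : μ₂ * (#(b₀ ∩ Δ) - 1) = μ₃ * (#Δ - 1) := by
    rw [← card_erase_of_mem hy]
    refine h2.mul_eq_mul_card_of_pair h3 hxy (fun h => hx (mem_of_mem_erase h))
      (notMem_erase y Δ) fun b hb hxb hyb => ?_
    rw [inter_erase, card_erase_of_mem (mem_inter.2 ⟨hyb, hy⟩), hd b hb hxb]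
  have through_z : μ₂ * #(b₀ ∩ Δ) = μ₃ * #Δ :=
    h2.mul_eq_mul_card_of_pair h3 hzx.symm hx hz fun b hb hxb _ => hd b hb hxb
  have hμ : μ₂ = μ₃ := by
    zify [hd_pos, hΔ_pos] at through_y through_z
    exact_mod_cast (by linarith : (μ₂ : ℤ) = μ₃)
  rw [hμ] at hkey
  have := Nat.eq_of_mul_eq_mul_left hμ₃ hkey
  omega

end Counting

section FlagTransitive

variable {X : Type*} [DecidableEq X] {B : Finset (Finset X)} {G : Subgroup (Equiv.Perm X)}

def IsFlagTransitive (G : Subgroup (Equiv.Perm X)) (B : Finset (Finset X)) : Prop :=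
  ∀ x₁ : X, ∀ b₁ ∈ B, x₁ ∈ b₁ → ∀ x₂ : X, ∀ b₂ ∈ B, x₂ ∈ b₂ →
    ∃ g ∈ G, g x₁ = x₂ ∧ b₁.image g = b₂

theorem IsFlagTransitive.card_inter_eq (hG : IsFlagTransitive G B) {x : X} {Δ : Finset X}
    (hΔ : ∀ g ∈ G, g x = x → Δ.image g = Δ) {b b' : Finset X} (hb : b ∈ B) (hx : x ∈ b)
    (hb' : b' ∈ B) (hx' : x ∈ b') : #(b ∩ Δ) = #(b' ∩ Δ) := by
  obtain ⟨g, hg, hgx, hgb⟩ := hG x b hb hx x b' hb' hx'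
  have hgbΔ : (b ∩ Δ).image g = b' ∩ Δ := by
    rw [image_inter _ _ g.injective, hgb, hΔ g hg hgx]
  rw [← hgbΔ, card_image_of_injective _ g.injective]

theorem IsFlagTransitive.exists_fix_apply_eq [Fintype X] (hG : IsFlagTransitive G B) {k : ℕ}
    (hk : ∀ b ∈ B, #b = k) (hkv : k < Fintype.card X) {μ₂ μ₃ : ℕ} (h2 : IsBalanced B 2 μ₂)
    (h3 : IsBalanced B 3 μ₃) (hμ₃ : 0 < μ₃) {x y z : X} (hy : y ≠ x) (hz : z ≠ x) :
    ∃ g ∈ G, g x = x ∧ g y = z := by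
  classical
  let Δ : Finset X := {w | ∃ g ∈ G, g x = x ∧ g y = w}
  have mem_Δ : ∀ w, w ∈ Δ ↔ ∃ g ∈ G, g x = x ∧ g y = w := by simp [Δ]
  have hΔ : ∀ g ∈ G, g x = x → Δ.image g = Δ := by
    refine fun g hg hgx => eq_of_subset_of_card_le (fun w hw => ?_)
      (card_image_of_injective _ g.injective).ge
    obtain ⟨u, hu, rfl⟩ := mem_image.1 hw
    obtain ⟨f, hf, hfx, rfl⟩ := (mem_Δ u).1 hu
    exact (mem_Δ _).2 ⟨g * f, mul_mem hg hf, by simp [hfx, hgx], rfl⟩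
  refine (mem_Δ z).1 (h2.mem_of_card_inter_eq hk hkv h3 hμ₃ (y := y) ?_ ?_ hz
    fun b hb hxb b' hb' hxb' => hG.card_inter_eq hΔ hb hxb hb' hxb')
  · intro hx
    obtain ⟨g, -, hgx, hgy⟩ := (mem_Δ x).1 hx
    exact hy (g.injective (hgy.trans hgx.symm))
  · exact (mem_Δ y).2 ⟨1, G.one_mem, rfl, rfl⟩

end FlagTransitive

theorem stmt_9_general (X : Type*) [Fintype X] [DecidableEq X]
    (v k t lam : ℕ) (B : Finset (Finset X))
    (hv : Fintype.card X = v) (ht : 3 ≤ t) (htk : t < k) (hkv : k < v) (hlam : 1 ≤ lam)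
    (hblocks : ∀ b ∈ B, b.card = k)
    (hdesign : ∀ S : Finset X, S.card = t → (B.filter (fun b => S ⊆ b)).card = lam)
    (G : Subgroup (Equiv.Perm X))
    (hflagtrans : ∀ x₁ : X, ∀ b₁ ∈ B, x₁ ∈ b₁ → ∀ x₂ : X, ∀ b₂ ∈ B, x₂ ∈ b₂ →
      ∃ g ∈ G, g x₁ = x₂ ∧ b₁.image g = b₂) :
    ∀ x₁ y₁ x₂ y₂ : X, x₁ ≠ y₁ → x₂ ≠ y₂ →
      ∃ g ∈ G, g x₁ = x₂ ∧ g y₁ = y₂ := by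
  subst hv
  intro x₁ y₁ x₂ y₂ h₁ h₂
  obtain ⟨μ₂, hμ₂, h2⟩ :=
    IsBalanced.exists_pos_of_le hblocks hkv.le hdesign hlam htk.le (s := 2) (by omega)
  obtain ⟨μ₃, hμ₃, h3⟩ := IsBalanced.exists_pos_of_le hblocks hkv.le hdesign hlam htk.le ht
  obtain ⟨b₁, hb₁, hxb₁⟩ := h2.exists_superset hμ₂ (card_pair h₁)
  obtain ⟨b₂, hb₂, hxb₂⟩ := h2.exists_superset hμ₂ (card_pair h₂)
  obtain ⟨g, hg, hgx, -⟩ :=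
    hflagtrans x₁ b₁ hb₁ (hxb₁ (mem_insert_self _ _)) x₂ b₂ hb₂ (hxb₂ (mem_insert_self _ _))
  obtain ⟨f, hf, hfx, hfy⟩ := IsFlagTransitive.exists_fix_apply_eq hflagtrans hblocks hkv h2 h3
    hμ₃ (y := g y₁) (z := y₂) (by rwa [← hgx, g.injective.ne_iff, ne_comm]) h₂.symm
  exact ⟨f * g, mul_mem hf hg, by simp [hgx, hfx], by simp [hfy]⟩

/-- Let `D = (X, B)` be a `t`-`(v, k, λ)` design with `t ≥ 3` and
`t < k < v`. If a group `G` of automorphisms of `D` acts transitively on the flags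
of `D`, then `G` acts `2`-transitively on the points of `D`. -/
theorem stmt_9 (X : Type*) [Fintype X] [DecidableEq X]
    (v k t lam : ℕ) (B : Finset (Finset X))
    (hv : Fintype.card X = v) (ht : 3 ≤ t) (htk : t < k) (hkv : k < v) (hlam : 1 ≤ lam)
    (hblocks : ∀ b ∈ B, b.card = k)
    (hdesign : ∀ S : Finset X, S.card = t → (B.filter (fun b => S ⊆ b)).card = lam)
    (G : Subgroup (Equiv.Perm X))
    (hAut : ∀ g ∈ G, ∀ b ∈ B, b.image g ∈ B)
    (hflagtrans : ∀ x₁ : X, ∀ b₁ ∈ B, x₁ ∈ b₁ → ∀ x₂ : X, ∀ b₂ ∈ B, x₂ ∈ b₂ →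
      ∃ g ∈ G, g x₁ = x₂ ∧ b₁.image g = b₂) :
    ∀ x₁ y₁ x₂ y₂ : X, x₁ ≠ y₁ → x₂ ≠ y₂ →
      ∃ g ∈ G, g x₁ = x₂ ∧ g y₁ = y₂ :=
  stmt_9_general X v k t lam B hv ht htk hkv hlam hblocks hdesign G hflagtrans
end

section
/- (Cameron & Praeger 1993) Let D = (X,B) be a t-(v,k,λ) design with t ≥ 2 and k + t ≤ v. If a group G of automorphisms of D acts transitively on the blocks of D, then G acts transitively on the ⌊t/2⌋-element subsets of X. -/
/-!
Let `s = ⌊t/2⌋` and let `W` be the incidence matrix between the `s`-subsets of `X` and the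
blocks. Expanding `‖Wᵀx‖²` with the intersection numbers of the design writes
`C(v-t, k-t) ‖Wᵀx‖²` as a combination `∑_{j ≤ s} γ_j ‖W_j x‖²` with `γ_j ≥ 0`, where `W_j` is the
incidence matrix between `j`-subsets and `s`-subsets. The term `j = s` is `γ_s ‖x‖²` with
`γ_s = λ C(v-2s, k-s) > 0` (this is where `k + s ≤ v` enters), so `Wᵀx = 0` forces `x = 0`.
If `S` and `T` were in different `G`-orbits, let `c_S`, `c_T` be the numbers of `s`-subsets of a
block lying in the orbits of `S`, `T`; by block-transitivity they do not depend on the block,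
so `x = c_T 1_{S^G} - c_S 1_{T^G}` satisfies `Wᵀx = 0` while `x_S = c_T > 0`.
-/

open Finset Pointwise MulAction

theorem Nat.choose_add_add_eq_sum_range (a c : ℕ) {i n : ℕ} (hin : i ≤ n) :
    (a + i).choose (c + i) = ∑ j ∈ range (n + 1), i.choose j * a.choose (c + j) := by
  induction i generalizing c with
  | zero => simp [sum_range_succ', Nat.choose_zero_succ]
  | succ i ih =>
    have hshift : ∑ j ∈ range (n + 1), i.choose j * a.choose (c + 1 + j)
        = ∑ j ∈ range n, i.choose j * a.choose (c + (j + 1)) := by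
      rw [sum_range_succ, Nat.choose_eq_zero_of_lt (by omega), zero_mul, add_zero]
      simp only [add_assoc, add_comm 1]
    calc (a + (i + 1)).choose (c + (i + 1))
        = (a + i).choose (c + i) + (a + i).choose (c + 1 + i) := by
          rw [add_right_comm c 1 i, ← Nat.choose_succ_succ]; rfl
      _ = ∑ j ∈ range (n + 1), (i + 1).choose j * a.choose (c + j) := by
          rw [ih c (by omega), ih (c + 1) (by omega), hshift, sum_range_succ' _ n,
            sum_range_succ' (fun j => (i + 1).choose j * _) n]
          simp only [Nat.choose_succ_succ, add_mul, sum_add_distrib, Nat.choose_zero_right]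
          ring

theorem Finset.sum_sq_sum_filter {α β R : Type*} [CommSemiring R] (A : Finset α)
    (C : Finset β) (r : α → β → Prop) [∀ a c, Decidable (r a c)] (x : α → R) :
    ∑ c ∈ C, (∑ a ∈ A with r a c, x a) ^ 2
      = ∑ a ∈ A, ∑ a' ∈ A, x a * x a' * #{c ∈ C | r a c ∧ r a' c} := by
  simp_rw [sum_filter, sq, sum_mul_sum, ite_zero_mul_ite_zero]
  rw [sum_comm]
  refine sum_congr rfl fun a _ => ?_
  rw [sum_comm]
  refine sum_congr rfl fun a' _ => ?_
  rw [← sum_filter, sum_const, nsmul_eq_mul, mul_comm]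

theorem Finset.card_filter_powersetCard_subset_inter {X : Type*} [Fintype X] [DecidableEq X]
    (U W : Finset X) (j : ℕ) :
    #{J ∈ powersetCard j univ | J ⊆ U ∧ J ⊆ W} = (#(U ∩ W)).choose j := by
  rw [← card_powersetCard]
  congr 1
  ext J
  simp only [mem_filter, mem_powersetCard, subset_univ, true_and, subset_inter_iff]
  tauto

structure IsDesign {X : Type*} [DecidableEq X] (B : Finset (Finset X)) (t k lam : ℕ) : Prop where
  card_block : ∀ b ∈ B, #b = k
  card_filter_superset : ∀ S : Finset X, #S = t → #{b ∈ B | S ⊆ b} = lam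

namespace IsDesign

variable {X : Type*} [Fintype X] [DecidableEq X] {B : Finset (Finset X)} {t k lam : ℕ}

theorem card_filter_superset_mul_choose (hD : IsDesign B t k lam) {S : Finset X}
    (hSt : #S ≤ t) :
    #{b ∈ B | S ⊆ b} * (k - #S).choose (t - #S)
      = (Fintype.card X - #S).choose (t - #S) * lam := by
  have hcount := card_mul_eq_card_mul (s := {b ∈ B | S ⊆ b})
    (t := {T ∈ powersetCard t univ | S ⊆ T}) (fun b T => T ⊆ b)
    (m := (k - #S).choose (t - #S)) (n := lam) ?_ ?_
  · rwa [card_filter_powersetCard_subset _ _ _ (subset_univ S) hSt, card_univ] at hcount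
  · intro b hb
    rw [mem_filter] at hb
    rw [bipartiteAbove, ← hD.card_block b hb.1,
      ← card_filter_powersetCard_subset _ _ _ hb.2 hSt]
    congr 1
    ext T
    simp only [mem_filter, mem_powersetCard, subset_univ, true_and]
    tauto
  · intro T hT
    rw [mem_filter, mem_powersetCard] at hT
    rw [bipartiteBelow, filter_filter, ← hD.card_filter_superset T hT.1.2]
    congr 1
    exact filter_congr fun b _ => ⟨And.right, fun hTb => ⟨hT.2.trans hTb, hTb⟩⟩

theorem card_filter_superset_mul_choose_card_sub (hD : IsDesign B t k lam) {S : Finset X}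
    (hSt : #S ≤ t) (htk : t ≤ k) :
    #{b ∈ B | S ⊆ b} * (Fintype.card X - t).choose (k - t)
      = lam * (Fintype.card X - #S).choose (k - #S) := by
  have hpos : 0 < (k - #S).choose (t - #S) := Nat.choose_pos (by omega)
  have hchain := Nat.choose_mul (n := Fintype.card X - #S) (k := k - #S) (s := t - #S)
    (by omega)
  rw [show Fintype.card X - #S - (t - #S) = Fintype.card X - t by omega,
    show k - #S - (t - #S) = k - t by omega] at hchain
  apply Nat.eq_of_mul_eq_mul_right hpos
  calc #{b ∈ B | S ⊆ b} * (Fintype.card X - t).choose (k - t) * (k - #S).choose (t - #S)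
      = #{b ∈ B | S ⊆ b} * (k - #S).choose (t - #S) * (Fintype.card X - t).choose (k - t) := by
        ring
    _ = lam * ((Fintype.card X - #S).choose (k - #S) * (k - #S).choose (t - #S)) := by
        rw [hD.card_filter_superset_mul_choose hSt, hchain, mul_comm _ lam, mul_assoc]
    _ = lam * (Fintype.card X - #S).choose (k - #S) * (k - #S).choose (t - #S) :=
        (mul_assoc ..).symm

theorem card_filter_union_superset_mul_choose (hD : IsDesign B t k lam) {s : ℕ} {U W : Finset X}
    (hU : #U = s) (hW : #W = s) (h2s : 2 * s ≤ t) (htk : t ≤ k) (hkv : k ≤ Fintype.card X) :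
    #{b ∈ B | U ∪ W ⊆ b} * (Fintype.card X - t).choose (k - t)
      = ∑ j ∈ range (s + 1),
          lam * (Fintype.card X - 2 * s).choose (k - 2 * s + j) * (#(U ∩ W)).choose j := by
  have hi : #(U ∩ W) ≤ s := hU ▸ card_le_card inter_subset_left
  have hUW : #(U ∪ W) = 2 * s - #(U ∩ W) := by
    have := card_union_add_card_inter U W
    omega
  rw [hD.card_filter_superset_mul_choose_card_sub (by omega) htk, hUW,
    show Fintype.card X - (2 * s - #(U ∩ W)) = Fintype.card X - 2 * s + #(U ∩ W) by omega,
    show k - (2 * s - #(U ∩ W)) = k - 2 * s + #(U ∩ W) by omega,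
    Nat.choose_add_add_eq_sum_range _ _ hi, mul_sum]
  exact sum_congr rfl fun j _ => by ring

theorem choose_mul_sum_sq_incidence (hD : IsDesign B t k lam) {s : ℕ} (h2s : 2 * s ≤ t)
    (htk : t ≤ k) (hkv : k ≤ Fintype.card X) (x : Finset X → ℚ) :
    ((Fintype.card X - t).choose (k - t) : ℚ)
        * ∑ b ∈ B, (∑ U ∈ powersetCard s univ with U ⊆ b, x U) ^ 2
      = ∑ j ∈ range (s + 1), ((lam * (Fintype.card X - 2 * s).choose (k - 2 * s + j) : ℕ) : ℚ)
          * ∑ J ∈ powersetCard j univ, (∑ U ∈ powersetCard s univ with J ⊆ U, x U) ^ 2 := by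
  rw [sum_sq_sum_filter]
  simp_rw [sum_sq_sum_filter _ _ (fun U (J : Finset X) => J ⊆ U),
    card_filter_powersetCard_subset_inter, mul_sum]
  conv_rhs => rw [sum_comm]
  refine sum_congr rfl fun U hU => ?_
  conv_rhs => rw [sum_comm]
  refine sum_congr rfl fun W hW => ?_
  have hcount := congrArg (Nat.cast : ℕ → ℚ) (hD.card_filter_union_superset_mul_choose
    (mem_powersetCard.1 hU).2 (mem_powersetCard.1 hW).2 h2s htk hkv)
  simp only [← union_subset_iff]
  push_cast at hcount ⊢
  rw [mul_left_comm, mul_comm _ (#_ : ℚ), hcount, mul_sum]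
  exact sum_congr rfl fun j _ => by ring

theorem eq_zero_of_sum_incidence_eq_zero (hD : IsDesign B t k lam) {s : ℕ} (h2s : 2 * s ≤ t)
    (htk : t ≤ k) (hks : k + s ≤ Fintype.card X) (hlam : 1 ≤ lam) {x : Finset X → ℚ}
    (hx : ∀ b ∈ B, ∑ U ∈ powersetCard s (univ : Finset X) with U ⊆ b, x U = 0) {U : Finset X}
    (hU : #U = s) : x U = 0 := by
  have hzero := hD.choose_mul_sum_sq_incidence h2s htk (by omega) x
  rw [sum_eq_zero fun b hb => by rw [hx b hb, sq, mul_zero], mul_zero, eq_comm,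
    sum_eq_zero_iff_of_nonneg fun j _ => by positivity] at hzero
  have hγ : 0 < lam * (Fintype.card X - 2 * s).choose (k - 2 * s + s) :=
    Nat.mul_pos hlam (Nat.choose_pos (by omega))
  have hsq := hzero s (self_mem_range_succ s)
  rw [mul_eq_zero, Nat.cast_eq_zero, or_iff_right hγ.ne',
    sum_eq_zero_iff_of_nonneg fun J _ => by positivity] at hsq
  have hsingle : {V ∈ powersetCard s (univ : Finset X) | U ⊆ V} = {U} := by
    ext V
    simp only [mem_filter, mem_powersetCard, subset_univ, true_and, mem_singleton]
    exact ⟨fun ⟨hV, hUV⟩ => (eq_of_subset_of_card_le hUV (by omega)).symm,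
      by rintro rfl; exact ⟨hU, subset_rfl⟩⟩
  simpa [hsingle] using hsq U (by simpa using hU)

end IsDesign

section Transitivity

variable {G X : Type*} [Group G] [MulAction G X] [Fintype X] [DecidableEq X]

theorem sum_filter_subset_smul_eq {M : Type*} [AddCommMonoid M] (s : ℕ) {x : Finset X → M}
    (hx : ∀ (g : G) U, x (g • U) = x U) (g : G) (b : Finset X) :
    ∑ U ∈ powersetCard s univ with U ⊆ g • b, x U
      = ∑ U ∈ powersetCard s univ with U ⊆ b, x U := by
  refine sum_nbij' (g⁻¹ • ·) (g • ·) ?_ ?_ (fun U _ => smul_inv_smul g U)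
    (fun U _ => inv_smul_smul g U) (fun U _ => (hx g⁻¹ U).symm)
  · intro U hU
    simp only [mem_filter, mem_powersetCard, subset_univ, true_and] at hU ⊢
    refine ⟨by rw [card_smul_finset, hU.1], ?_⟩
    rw [← smul_finset_subset_smul_finset_iff (a := g), smul_inv_smul]
    exact hU.2
  · intro U hU
    simp only [mem_filter, mem_powersetCard, subset_univ, true_and] at hU ⊢
    exact ⟨by rw [card_smul_finset, hU.1], smul_finset_subset_smul_finset hU.2⟩

theorem indicator_orbit_smul {α M : Type*} [MulAction G α] [Zero M] [One M] (a : α) (g : G)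
    (b : α) :
    (orbit G a).indicator 1 (g • b) = (orbit G a).indicator (1 : α → M) b := by
  have hmem : g • b ∈ orbit G a ↔ b ∈ orbit G a := by
    rw [← orbit_eq_iff, orbit_smul, orbit_eq_iff]
  classical
  simp only [Set.indicator_apply, hmem, Pi.one_apply]

theorem mem_orbit_of_incidence_injective {s : ℕ} {B : Finset (Finset X)}
    (htrans : ∀ b₁ ∈ B, ∀ b₂ ∈ B, ∃ g : G, g • b₁ = b₂)
    (hinj : ∀ x : Finset X → ℚ, (∀ b ∈ B, ∑ U ∈ powersetCard s univ with U ⊆ b, x U = 0) →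
      ∀ U : Finset X, #U = s → x U = 0)
    {S T : Finset X} (hS : #S = s) (hT : #T = s) : T ∈ orbit G S := by
  obtain ⟨b₀, hb₀, hTb₀⟩ : ∃ b ∈ B, T ⊆ b := by
    by_contra! h
    simpa using hinj (fun U => if U = T then 1 else 0) (fun b hb => by simp [h b hb]) T hT
  have hconst : ∀ S' : Finset X, ∃ c : ℚ, ∀ b ∈ B,
      ∑ U ∈ powersetCard s univ with U ⊆ b, (orbit G S').indicator 1 U = c := by
    refine fun S' => ⟨∑ U ∈ powersetCard s univ with U ⊆ b₀, (orbit G S').indicator 1 U,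
      fun b hb => ?_⟩
    obtain ⟨g, rfl⟩ := htrans b₀ hb₀ b hb
    exact sum_filter_subset_smul_eq s (indicator_orbit_smul S') g b₀
  obtain ⟨cS, hcS⟩ := hconst S
  obtain ⟨cT, hcT⟩ := hconst T
  have hcT_pos : 0 < cT := by
    have hT_mem : T ∈ {U ∈ powersetCard s (univ : Finset X) | U ⊆ b₀} :=
      mem_filter.2 ⟨mem_powersetCard.2 ⟨subset_univ T, hT⟩, hTb₀⟩
    rw [← hcT b₀ hb₀]
    calc (0 : ℚ) < (orbit G T).indicator 1 T := by simp [mem_orbit_self]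
      _ ≤ ∑ U ∈ powersetCard s univ with U ⊆ b₀, (orbit G T).indicator 1 U :=
        single_le_sum (f := (orbit G T).indicator 1)
          (fun U _ => Set.indicator_nonneg (fun _ _ => zero_le_one) U) hT_mem
  by_contra hST
  have hx := hinj (fun U => cT * (orbit G S).indicator 1 U - cS * (orbit G T).indicator 1 U)
    (fun b hb => by rw [sum_sub_distrib, ← mul_sum, ← mul_sum, hcS b hb, hcT b hb]; ring) S hS
  simp [mem_orbit_self, mem_orbit_symm.not.1 hST] at hx
  exact hcT_pos.ne' hx

end Transitivity

theorem stmt_10_general (X : Type*) [Fintype X] [DecidableEq X]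
    (v k t lam : ℕ) (B : Finset (Finset X))
    (hv : Fintype.card X = v) (htk : t ≤ k) (hkv : k + t ≤ v) (hlam : 1 ≤ lam)
    (hblocks : ∀ b ∈ B, b.card = k)
    (hdesign : ∀ S : Finset X, S.card = t → (B.filter (fun b => S ⊆ b)).card = lam)
    (G : Subgroup (Equiv.Perm X))
    (hblocktrans : ∀ b₁ ∈ B, ∀ b₂ ∈ B, ∃ g ∈ G, b₁.image g = b₂) :
    ∀ S T : Finset X, S.card = t / 2 → T.card = t / 2 →
      ∃ g ∈ G, S.image g = T := by
  intro S T hS hT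
  subst hv
  have hD : IsDesign B t k lam := ⟨hblocks, hdesign⟩
  have hinj (x : Finset X → ℚ)
      (hx : ∀ b ∈ B, ∑ U ∈ powersetCard (t / 2) univ with U ⊆ b, x U = 0)
      (U : Finset X) (hU : #U = t / 2) : x U = 0 :=
    hD.eq_zero_of_sum_incidence_eq_zero (Nat.mul_div_le t 2) htk (by omega) hlam hx hU
  have htrans (b₁ : Finset X) (hb₁ : b₁ ∈ B) (b₂ : Finset X) (hb₂ : b₂ ∈ B) :
      ∃ g : G, g • b₁ = b₂ := by
    obtain ⟨g, hg, h⟩ := hblocktrans b₁ hb₁ b₂ hb₂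
    exact ⟨⟨g, hg⟩, h⟩
  obtain ⟨g, hg⟩ := mem_orbit_of_incidence_injective htrans hinj hS hT
  exact ⟨g, g.2, hg⟩

/-- **Cameron & Praeger 1993.** Let `D = (X, B)` be a
`t`-`(v, k, λ)` design with `t ≥ 2` and `k + t ≤ v`. If a group `G` of
automorphisms of `D` acts transitively on the blocks of `D`, then `G` acts
transitively on the `⌊t/2⌋`-element subsets of `X`. -/
theorem stmt_10 (X : Type*) [Fintype X] [DecidableEq X]
    (v k t lam : ℕ) (B : Finset (Finset X))
    (hv : Fintype.card X = v) (ht : 2 ≤ t) (htk : t ≤ k) (hkv : k + t ≤ v) (hlam : 1 ≤ lam)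
    (hblocks : ∀ b ∈ B, b.card = k)
    (hdesign : ∀ S : Finset X, S.card = t → (B.filter (fun b => S ⊆ b)).card = lam)
    (G : Subgroup (Equiv.Perm X))
    (hAut : ∀ g ∈ G, ∀ b ∈ B, b.image g ∈ B)
    (hblocktrans : ∀ b₁ ∈ B, ∀ b₂ ∈ B, ∃ g ∈ G, b₁.image g = b₂) :
    ∀ S T : Finset X, S.card = t / 2 → T.card = t / 2 →
      ∃ g ∈ G, S.image g = T :=
  stmt_10_general X v k t lam B hv htk hkv hlam hblocks hdesign G hblocktrans
end

section
/- Let D = (X,B) be a non-trivial Steiner 6-design with exactly 32 points. Then 29 divides the number b of blocks of D; consequently, if a group G of automorphisms of D acts transitively on the blocks, then 29 divides the order of G. -/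
/-!
Counting the `6`-subsets of the point set gives `b · C(k, 6) = C(32, 6)`, and counting the points
outside a fixed `5`-subset `T` gives `r · (k - 5) = 27`, where `r` is the number of blocks through
`T`. As `k < 32`, `k - 5` is a proper divisor of `27`, so `6 ≤ k ≤ 14` and the prime `29`
divides `C(32, 6)` but not `C(k, 6)`, hence divides `b`. A block-transitive group has `B` as a
single orbit, and orbit sizes divide the group order.
-/

open Finset Pointwise

structure IsSteinerSystem_s17 {X : Type*} [DecidableEq X] (t k : ℕ) (B : Finset (Finset X)) :
    Prop where
  card_eq_of_mem : ∀ b ∈ B, #b = k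
  card_filter_superset : ∀ S : Finset X, #S = t → #{b ∈ B | S ⊆ b} = 1

namespace IsSteinerSystem_s17

variable {X : Type*} [Fintype X] [DecidableEq X] {t k : ℕ} {B : Finset (Finset X)}

theorem card_mul_choose (hD : IsSteinerSystem_s17 t k B) :
    #B * k.choose t = (Fintype.card X).choose t := by
  have hcount := card_mul_eq_card_mul (s := B) (t := powersetCard t univ) (fun b S => S ⊆ b)
    (m := k.choose t) (n := 1)
    (fun b hb => by
      have hsub :
          (powersetCard t univ).bipartiteAbove (fun b S => S ⊆ b) b = powersetCard t b := by
        ext S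
        simp [bipartiteAbove, mem_powersetCard, and_comm]
      rw [hsub, card_powersetCard, hD.card_eq_of_mem b hb])
    (fun S hS => by exact hD.card_filter_superset S (mem_powersetCard_univ.mp hS))
  rwa [card_powersetCard, card_univ, mul_one] at hcount

theorem card_filter_superset_mul_sub (hD : IsSteinerSystem_s17 t k B) {T : Finset X}
    (hT : #T + 1 = t) : #{b ∈ B | T ⊆ b} * (k - #T) = Fintype.card X - #T := by
  have hcount := card_mul_eq_card_mul (s := {b ∈ B | T ⊆ b}) (t := univ \ T)
    (fun b x => x ∈ b) (m := k - #T) (n := 1)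
    (fun b hb => by
      obtain ⟨hbB, hTb⟩ := mem_filter.mp hb
      have hsdiff : (univ \ T).bipartiteAbove (fun b x => x ∈ b) b = b \ T := by
        ext x
        simp [bipartiteAbove, and_comm]
      rw [hsdiff, card_sdiff_of_subset hTb, hD.card_eq_of_mem b hbB])
    (fun x hx => by
      have hxT : x ∉ T := (mem_sdiff.mp hx).2
      have hblocks : {b ∈ B | T ⊆ b}.bipartiteBelow (fun b x => x ∈ b) x
          = {b ∈ B | insert x T ⊆ b} := by
        ext b
        simp only [bipartiteBelow, mem_filter, insert_subset_iff]
        tauto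
      rw [hblocks, hD.card_filter_superset _ (by rw [card_insert_of_notMem hxT, hT])])
  rwa [card_sdiff_of_subset (subset_univ T), card_univ, mul_one] at hcount

theorem nonempty (hD : IsSteinerSystem_s17 t k B) (ht : t ≤ Fintype.card X) : B.Nonempty := by
  obtain ⟨S, -, hS⟩ :=
    exists_subset_card_eq (s := (univ : Finset X)) (n := t) (by rwa [card_univ])
  obtain ⟨b, hb⟩ := card_pos.mp (hD.card_filter_superset S hS ▸ Nat.one_pos)
  exact ⟨b, (mem_filter.mp hb).1⟩

end IsSteinerSystem_s17

theorem card_dvd_natCard_of_isPretransitive_on {X : Type*} [DecidableEq X]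
    (G : Subgroup (Equiv.Perm X)) {B : Finset (Finset X)} (hB : B.Nonempty)
    (hmaps : ∀ g ∈ G, ∀ b ∈ B, b.image g ∈ B)
    (htrans : ∀ b₁ ∈ B, ∀ b₂ ∈ B, ∃ g ∈ G, b₁.image g = b₂) :
    #B ∣ Nat.card G := by
  obtain ⟨b₀, hb₀⟩ := hB
  -- For the pointwise action, `g • b` is definitionally `b.image g`.
  have horbit : MulAction.orbit G b₀ = (B : Set (Finset X)) := by
    ext b
    constructor
    · rintro ⟨g, rfl⟩
      exact hmaps g g.2 b₀ hb₀
    · intro hb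
      obtain ⟨g, hg, rfl⟩ := htrans b₀ hb₀ b hb
      exact ⟨⟨g, hg⟩, rfl⟩
  have hindex : (MulAction.stabilizer G b₀).index = #B := by
    rw [MulAction.index_stabilizer, horbit, Set.ncard_coe_finset]
  exact hindex ▸ Dvd.intro_left _ (Subgroup.card_mul_index _)

theorem stmt_17_general (X : Type*) [Fintype X] [DecidableEq X]
    (k : ℕ) (B : Finset (Finset X))
    (hv : Fintype.card X = 32) (hkv : k < 32)
    (hblocks : ∀ b ∈ B, b.card = k)
    (hdesign : ∀ S : Finset X, S.card = 6 → (B.filter (fun b => S ⊆ b)).card = 1) :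
    29 ∣ B.card ∧
      ∀ G : Subgroup (Equiv.Perm X),
        (∀ g ∈ G, ∀ b ∈ B, b.image g ∈ B) →
        (∀ b₁ ∈ B, ∀ b₂ ∈ B, ∃ g ∈ G, b₁.image g = b₂) →
        29 ∣ Nat.card G := by
  have hD : IsSteinerSystem_s17 6 k B := ⟨hblocks, hdesign⟩
  have hk : 6 ≤ k ∧ k < 29 := by
    obtain ⟨T, -, hT⟩ := exists_subset_card_eq (s := (univ : Finset X)) (n := 5)
      (by rw [card_univ, hv]; norm_num)
    have hlocal := hD.card_filter_superset_mul_sub (T := T) (by rw [hT])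
    rw [hT, hv] at hlocal
    interval_cases k <;> omega
  have h29 : 29 ∣ #B := by
    have hp : Nat.Prime 29 := by norm_num
    have hchoose : 29 ∣ (Fintype.card X).choose 6 := by rw [hv]; decide
    rw [← hD.card_mul_choose] at hchoose
    exact (hp.coprime_choose_of_lt hk.2 hk.1).dvd_of_dvd_mul_right hchoose
  refine ⟨h29, fun G hmaps htrans => h29.trans ?_⟩
  exact card_dvd_natCard_of_isPretransitive_on G (hD.nonempty (by rw [hv]; norm_num)) hmaps htrans

/-- Let `D = (X, B)` be a non-trivial Steiner `6`-design with
exactly `32` points. Then `29` divides the number `b` of blocks of `D`;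
consequently, if a group `G` of automorphisms of `D` acts transitively on the
blocks, then `29` divides the order of `G`. -/
theorem stmt_17 (X : Type*) [Fintype X] [DecidableEq X]
    (k : ℕ) (B : Finset (Finset X))
    (hv : Fintype.card X = 32) (htk : 6 < k) (hkv : k < 32)
    (hblocks : ∀ b ∈ B, b.card = k)
    (hdesign : ∀ S : Finset X, S.card = 6 → (B.filter (fun b => S ⊆ b)).card = 1) :
    29 ∣ B.card ∧
      ∀ G : Subgroup (Equiv.Perm X),
        (∀ g ∈ G, ∀ b ∈ B, b.image g ∈ B) →
        (∀ b₁ ∈ B, ∀ b₂ ∈ B, ∃ g ∈ G, b₁.image g = b₂) →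
        29 ∣ Nat.card G :=
  stmt_17_general X k B hv hkv hblocks hdesign
end

section
/- Let e ≥ 3 be an integer and q = 2^e. Then for every integer k ≥ 6, (q-2)(q-3)(q-4) ≠ k(k-1)(k-2)(k-3)(k-4)(k-5); indeed 16 divides the product k(k-1)(k-2)(k-3)(k-4)(k-5) of any six consecutive integers with k ≥ 6, whereas the 2-adic valuation of (q-2)(q-3)(q-4) equals exactly 3, so 16 does not divide (q-2)(q-3)(q-4). -/
/-!
A product of six consecutive integers is `6! * choose k 6`, and `16 ∣ 720 = 6!`. On the other
side, for `8 ∣ q` the factors `q - 2 = 2 (q/2 - 1)`, `q - 3` and `q - 4 = 4 (q/4 - 1)` contribute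
`2`-adic valuations `1`, `0` and `2`, so `(q - 2)(q - 3)(q - 4)` is exactly divisible by `8`.
-/

lemma Nat.mul_sub_one_mul_sub_two_mul_sub_three_mul_sub_four_mul_sub_five (k : ℕ) :
    k * (k - 1) * (k - 2) * (k - 3) * (k - 4) * (k - 5) = k.descFactorial 6 := by
  simp only [Nat.descFactorial_succ, Nat.descFactorial_zero, Nat.sub_zero]
  ring

lemma sixteen_dvd_mul_sub_one_mul_sub_two_mul_sub_three_mul_sub_four_mul_sub_five (k : ℕ) :
    16 ∣ k * (k - 1) * (k - 2) * (k - 3) * (k - 4) * (k - 5) := by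
  rw [Nat.mul_sub_one_mul_sub_two_mul_sub_three_mul_sub_four_mul_sub_five,
    Nat.descFactorial_eq_factorial_mul_choose]
  exact Dvd.dvd.mul_right (by decide : 16 ∣ Nat.factorial 6) _

lemma padicValNat_two_sub_two_mul_sub_three_mul_sub_four {q : ℕ} (h8 : 8 ∣ q) (hq : q ≠ 0) :
    padicValNat 2 ((q - 2) * (q - 3) * (q - 4)) = 3 := by
  obtain ⟨a, rfl⟩ := h8
  have ha : 1 ≤ a := by omega
  set M := (4 * a - 1) * (8 * a - 3) * (2 * a - 1)
  have hprod : (8 * a - 2) * (8 * a - 3) * (8 * a - 4) = 2 ^ 3 * M := by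
    rw [show 8 * a - 2 = 2 * (4 * a - 1) by omega, show 8 * a - 4 = 4 * (2 * a - 1) by omega]
    ring
  have hM : Odd M :=
    ((Nat.odd_iff.mpr (by omega)).mul (Nat.odd_iff.mpr (by omega))).mul (Nat.odd_iff.mpr (by omega))
  rw [hprod, padicValNat.mul (by positivity) hM.pos.ne', padicValNat.prime_pow,
    padicValNat.eq_zero_of_not_dvd hM.not_two_dvd_nat]

lemma not_dvd_of_padicValNat_lt {p n a : ℕ} [Fact p.Prime] (h : padicValNat p a < n) (ha : a ≠ 0) :
    ¬ p ^ n ∣ a := by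
  rw [padicValNat_dvd_iff_le ha]
  omega

/-- Let `e ≥ 3` be an integer and `q = 2 ^ e`. Then for every
integer `k ≥ 6`, `(q-2)(q-3)(q-4) ≠ k(k-1)(k-2)(k-3)(k-4)(k-5)`; indeed `16`
divides the product `k(k-1)(k-2)(k-3)(k-4)(k-5)` of any six consecutive integers
with `k ≥ 6`, whereas the `2`-adic valuation of `(q-2)(q-3)(q-4)` equals exactly
`3`, so `16` does not divide `(q-2)(q-3)(q-4)`. -/
theorem stmt_19 (e : ℕ) (he : 3 ≤ e) (q : ℕ) (hq : q = 2 ^ e) :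
    (∀ k : ℕ, 6 ≤ k →
      (q - 2) * (q - 3) * (q - 4) ≠ k * (k - 1) * (k - 2) * (k - 3) * (k - 4) * (k - 5)) ∧
    (∀ k : ℕ, 6 ≤ k → 16 ∣ k * (k - 1) * (k - 2) * (k - 3) * (k - 4) * (k - 5)) ∧
    padicValNat 2 ((q - 2) * (q - 3) * (q - 4)) = 3 ∧
    ¬ 16 ∣ (q - 2) * (q - 3) * (q - 4) := by
  have h8 : 8 ∣ q := hq ▸ pow_dvd_pow 2 he
  have hval := padicValNat_two_sub_two_mul_sub_three_mul_sub_four h8 (hq ▸ by positivity)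
  have hnot16 : ¬ 16 ∣ (q - 2) * (q - 3) * (q - 4) :=
    not_dvd_of_padicValNat_lt (p := 2) (n := 4) (by omega) fun h0 ↦ by simp [h0] at hval
  refine ⟨fun k _ heq ↦ hnot16 ?_,
    fun k _ ↦ sixteen_dvd_mul_sub_one_mul_sub_two_mul_sub_three_mul_sub_four_mul_sub_five k,
    hval, hnot16⟩
  exact heq ▸ sixteen_dvd_mul_sub_one_mul_sub_two_mul_sub_three_mul_sub_four_mul_sub_five k
end
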